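/- arXiv:2212.06447 — 2 statements merged into one kernel-verified Lean document; each statement's English description precedes it below -/
import Mathlib

section
/- Fix real numbers x, y, p₁, p₂, q₁, q₄, r, γ, e, m₁, m₂, ξ, ω, σ₁, σ₂, c₁, c₂ with γ ≠ 0, y ≠ 0, ξ ≠ 0 and ωx² + 1 ≠ 0, and define D(α) = (1 + αξ)(ωx² + 1) + x and H(α) = 1 + [r(1 − x/γ) − y/D(α)]·x·p₁ + [e(x + ξ(ωx² + 1))/D(α) − m₁ − m₂y]·y·p₂ + σ₁xq₁ + σ₂yq₄ + x·c₁ + y·c₂. Then for every α with D(α) ≠ 0, the derivative of H at α vanishes if and only if x·p₁ = e·p₂·(x + ξ(ωx² + 1)). -/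
/-- Arrow condition with the quality of additional food `α` as control:
with `D(α) = (1 + αξ)(ωx² + 1) + x ≠ 0`, `y ≠ 0`, `ξ ≠ 0`, `ωx² + 1 ≠ 0`,
the derivative of the Hamiltonian at `α` vanishes if and only if
`xp₁ = ep₂(x + ξ(ωx² + 1))`. -/
theorem arrow_condition_quality
    (x y p₁ p₂ q₁ q₄ r γ e m₁ m₂ ξ ω σ₁ σ₂ c₁ c₂ : ℝ)
    (hγ : γ ≠ 0) (hy : y ≠ 0) (hξ : ξ ≠ 0) (hω : ω * x ^ 2 + 1 ≠ 0)
    (α : ℝ) (hD : (1 + α * ξ) * (ω * x ^ 2 + 1) + x ≠ 0) :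
    deriv
      (fun α : ℝ =>
        1 + (r * (1 - x / γ) - y / ((1 + α * ξ) * (ω * x ^ 2 + 1) + x)) * x * p₁
          + (e * (x + ξ * (ω * x ^ 2 + 1)) / ((1 + α * ξ) * (ω * x ^ 2 + 1) + x)
              - m₁ - m₂ * y) * y * p₂
          + σ₁ * x * q₁ + σ₂ * y * q₄ + x * c₁ + y * c₂)
      α = 0
    ↔ x * p₁ = e * p₂ * (x + ξ * (ω * x ^ 2 + 1)) := by
  set c : ℝ := ω * x ^ 2 + 1 with hc
  set D : ℝ := (1 + α * ξ) * c + x with hDdef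
  set K : ℝ := x + ξ * c with hK
  have hg : HasDerivAt (fun α : ℝ => (1 + α * ξ) * c + x) (ξ * c) α := by
    have h1 : HasDerivAt (fun α : ℝ => 1 + α * ξ) ξ α := by
      simpa using (((hasDerivAt_id α).mul_const ξ).const_add 1)
    simpa using (h1.mul_const c).add_const x
  have h2 : HasDerivAt (fun α : ℝ => y / ((1 + α * ξ) * c + x))
      ((0 * D - y * (ξ * c)) / D ^ 2) α :=
    (hasDerivAt_const α y).div hg hD
  have h3 : HasDerivAt (fun α : ℝ => e * K / ((1 + α * ξ) * c + x))
      ((0 * D - e * K * (ξ * c)) / D ^ 2) α :=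
    (hasDerivAt_const α (e * K)).div hg hD
  have hH : HasDerivAt
      (fun α : ℝ =>
        1 + (r * (1 - x / γ) - y / ((1 + α * ξ) * c + x)) * x * p₁
          + (e * K / ((1 + α * ξ) * c + x) - m₁ - m₂ * y) * y * p₂
          + σ₁ * x * q₁ + σ₂ * y * q₄ + x * c₁ + y * c₂)
      ((0 - (0 * D - y * (ξ * c)) / D ^ 2) * x * p₁
        + (0 * D - e * K * (ξ * c)) / D ^ 2 * y * p₂) α := by
    exact (((((((((hasDerivAt_const α (r * (1 - x / γ))).sub h2).mul_const x).mul_const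
      p₁).const_add 1).add ((((h3.sub_const m₁).sub_const (m₂ * y)).mul_const y).mul_const
      p₂)).add_const (σ₁ * x * q₁)).add_const (σ₂ * y * q₄)).add_const (x * c₁)).add_const (y * c₂)
  rw [hH.deriv]
  rw [show (0 - (0 * D - y * (ξ * c)) / D ^ 2) * x * p₁
        + (0 * D - e * K * (ξ * c)) / D ^ 2 * y * p₂
      = y * (ξ * c) / D ^ 2 * (x * p₁ - e * p₂ * K) by ring]
  have hD2 : D ^ 2 ≠ 0 := pow_ne_zero _ hD
  constructor
  · intro h
    rcases mul_eq_zero.1 h with h' | h'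
    · exact absurd h' (div_ne_zero (mul_ne_zero hy (mul_ne_zero hξ hω)) hD2)
    · linarith [sub_eq_zero.1 h']
  · intro h
    rw [show x * p₁ - e * p₂ * K = 0 by rw [h]; ring, mul_zero]
end

section
/- Fix real numbers x, y, p₁, p₂, q₁, q₄, r, γ, e, m₁, m₂, α, ω, σ₁, σ₂, c₁, c₂ with γ ≠ 0, y ≠ 0 and ωx² + 1 ≠ 0, and define D(ξ) = (1 + αξ)(ωx² + 1) + x and H(ξ) = 1 + [r(1 − x/γ) − y/D(ξ)]·x·p₁ + [e(x + ξ(ωx² + 1))/D(ξ) − m₁ − m₂y]·y·p₂ + σ₁xq₁ + σ₂yq₄ + x·c₁ + y·c₂. Then for every ξ with D(ξ) ≠ 0, the derivative of H at ξ vanishes if and only if α·x·p₁ + e·p₂·(1 + ωx² + x(1 − α)) = 0. -/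
/-- Arrow condition with the quantity of additional food `ξ` as control:
with `D(ξ) = (1 + αξ)(ωx² + 1) + x ≠ 0`, `y ≠ 0`, `ωx² + 1 ≠ 0`, the
derivative of the Hamiltonian at `ξ` vanishes if and only if
`αxp₁ + ep₂(1 + ωx² + x(1 − α)) = 0`. -/
theorem arrow_condition_quantity
    (x y p₁ p₂ q₁ q₄ r γ e m₁ m₂ α ω σ₁ σ₂ c₁ c₂ : ℝ)
    (hγ : γ ≠ 0) (hy : y ≠ 0) (hω : ω * x ^ 2 + 1 ≠ 0)
    (ξ : ℝ) (hD : (1 + α * ξ) * (ω * x ^ 2 + 1) + x ≠ 0) :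
    deriv
      (fun ξ : ℝ =>
        1 + (r * (1 - x / γ) - y / ((1 + α * ξ) * (ω * x ^ 2 + 1) + x)) * x * p₁
          + (e * (x + ξ * (ω * x ^ 2 + 1)) / ((1 + α * ξ) * (ω * x ^ 2 + 1) + x)
              - m₁ - m₂ * y) * y * p₂
          + σ₁ * x * q₁ + σ₂ * y * q₄ + x * c₁ + y * c₂)
      ξ = 0
    ↔ α * x * p₁ + e * p₂ * (1 + ω * x ^ 2 + x * (1 - α)) = 0 := by
  set W : ℝ := ω * x ^ 2 + 1 with hW
  set Dv : ℝ := (1 + α * ξ) * W + x with hDv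
  -- derivative of the denominator
  have hDder : HasDerivAt (fun ξ : ℝ => (1 + α * ξ) * W + x) (α * W) ξ := by
    have h1 : HasDerivAt (fun ξ : ℝ => 1 + α * ξ) α ξ := by
      simpa using ((hasDerivAt_id ξ).const_mul α).const_add (1 : ℝ)
    simpa using (h1.mul_const W).add_const x
  have htermA : HasDerivAt
      (fun ξ : ℝ => (r * (1 - x / γ) - y / ((1 + α * ξ) * W + x)) * x * p₁)
      (-((0 * Dv - y * (α * W)) / Dv ^ 2) * x * p₁) ξ := by
    have hq : HasDerivAt (fun ξ : ℝ => y / ((1 + α * ξ) * W + x))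
        ((0 * Dv - y * (α * W)) / Dv ^ 2) ξ :=
      (hasDerivAt_const ξ y).div hDder hD
    simpa using ((hq.const_sub (r * (1 - x / γ))).mul_const x).mul_const p₁
  have htermB : HasDerivAt
      (fun ξ : ℝ => (e * (x + ξ * W) / ((1 + α * ξ) * W + x) - m₁ - m₂ * y) * y * p₂)
      ((e * W * Dv - e * (x + ξ * W) * (α * W)) / Dv ^ 2 * y * p₂) ξ := by
    have hn : HasDerivAt (fun ξ : ℝ => e * (x + ξ * W)) (e * W) ξ := by
      simpa using (((hasDerivAt_id ξ).mul_const W).const_add x).const_mul e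
    have hq := hn.div hDder hD
    simpa using (((hq.sub_const m₁).sub_const (m₂ * y)).mul_const y).mul_const p₂
  have hH : HasDerivAt
      (fun ξ : ℝ =>
        1 + (r * (1 - x / γ) - y / ((1 + α * ξ) * W + x)) * x * p₁
          + (e * (x + ξ * W) / ((1 + α * ξ) * W + x) - m₁ - m₂ * y) * y * p₂
          + σ₁ * x * q₁ + σ₂ * y * q₄ + x * c₁ + y * c₂)
      (-((0 * Dv - y * (α * W)) / Dv ^ 2) * x * p₁
        + (e * W * Dv - e * (x + ξ * W) * (α * W)) / Dv ^ 2 * y * p₂) ξ := by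
    simpa using ((((htermA.const_add 1).add htermB).add_const (σ₁ * x * q₁)).add_const
      (σ₂ * y * q₄)).add_const (x * c₁) |>.add_const (y * c₂)
  rw [hH.deriv]
  have key : -((0 * Dv - y * (α * W)) / Dv ^ 2) * x * p₁
      + (e * W * Dv - e * (x + ξ * W) * (α * W)) / Dv ^ 2 * y * p₂
      = y * W / Dv ^ 2 * (α * x * p₁ + e * p₂ * (1 + ω * x ^ 2 + x * (1 - α))) := by
    rw [hW, hDv, hW]
    field_simp
    ring
  rw [key]
  have hc : y * W / Dv ^ 2 ≠ 0 :=
    div_ne_zero (mul_ne_zero hy hω) (pow_ne_zero 2 hD)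
  constructor
  · intro h
    rcases mul_eq_zero.mp h with h | h
    · exact absurd h hc
    · exact h
  · intro h; rw [h, mul_zero]
end
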